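/- Let C_0 = {(log|z_1|,…,log|z_n|) : |z_1|² + ⋯ + |z_n|² < 1} ⊂ ℝⁿ and let f, g be convex functions on C_0 increasing in each variable with f = g = 0 on ∂C_0, extended by +∞ outside C_0. If for each a ∈ C_0 and each b ∈ ℕⁿ with strictly positive entries one has lim_{t→−∞} f(a+tb)/t ≥ lim_{t→−∞} g(a+tb)/t, then lim_{c→+∞} P_{C_0}(f, g+c) = f almost everywhere on C_0. -/

import Mathlib

/-!
At `x ∈ C₀` take a subgradient `p ≥ 0` of `f`. Since `C₀` lies in the negative orthant,
`y ↦ f x + p ⬝ᵥ (y - x) + ε ∑ i, y i` is an affine minorant of `f`, and it lies below `g + c` for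
some `c` as soon as its slope `p + ε • 1` is the slope of an affine minorant of `g`. These slopes
form a convex upper set `S`. Subgradients of `g` at far points of a ray `x + t • b`, `t → -∞`,
lie in `S`, and by the slope hypothesis some of them have `q ⬝ᵥ b` at most `p ⬝ᵥ b + 1` for every
positive integer direction `b`. A separating hyperplane for `p` and `S` would have a nonnegative
normal, and rounding large multiples of it to integer directions gives a contradiction; hence
`p ∈ closure S` and `p + ε • 1 ∈ S`. So the convergence holds at every point of `C₀`.
-/

open Filter MeasureTheory Metric Set
open scoped ENNReal Topology

noncomputable section

/-- The logarithmic image of the unit ball: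
`C₀ = {(log|z₁|,…,log|zₙ|) : Σ|zᵢ|² < 1} = {x : Σ e^{2xᵢ} < 1}`. -/
def C0 (n : ℕ) : Set (Fin n → ℝ) := {x | ∑ i, Real.exp (2 * x i) < 1}

/-- The convex envelope `P_{C₀}(f, g+c)(x)`: the supremum at `x` of all convex functions on
`C₀` lying below `min(f, g+c)` on `C₀`. -/
def convEnv (n : ℕ) (f g : (Fin n → ℝ) → ℝ) (c : ℝ) (x : Fin n → ℝ) : EReal :=
  ⨆ (u : (Fin n → ℝ) → ℝ) (_ : ConvexOn ℝ (C0 n) u ∧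
      ∀ y ∈ C0 n, u y ≤ min (f y) (g y + c)), ((u x : ℝ) : EReal)

/-- The slope at infinity of `h` along the ray `t ↦ a + t b`, `t → -∞`
(for convex `h` the `limsup` is an honest limit). -/
def raySlope (n : ℕ) (h : (Fin n → ℝ) → ℝ) (a b : Fin n → ℝ) : EReal :=
  Filter.limsup (fun t : ℝ => ((h (a + t • b) / t : ℝ) : EReal)) atBot

theorem ConvexOn.exists_subgradient {E : Type*} [NormedAddCommGroup E] [NormedSpace ℝ E]
    [FiniteDimensional ℝ E] {s : Set E} {h : E → ℝ} (hs : IsOpen s) (hh : ConvexOn ℝ s h)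
    {x : E} (hx : x ∈ s) : ∃ ℓ : E →L[ℝ] ℝ, ∀ y ∈ s, h x + ℓ (y - x) ≤ h y := by
  set A : Set (E × ℝ) := {p | p.1 ∈ s ∧ h p.1 < p.2}
  have hA : IsOpen A := by
    have hcont : ContinuousOn (fun p : E × ℝ => p.2 - h p.1) (s ×ˢ univ) :=
      continuous_snd.continuousOn.sub
        ((hh.continuousOn hs).comp continuous_fst.continuousOn fun p hp => hp.1)
    convert hcont.isOpen_inter_preimage (hs.prod isOpen_univ) (isOpen_Ioi (a := 0)) using 1
    ext p
    simp [A]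
  obtain ⟨φ, hφ⟩ := geometric_hahn_banach_open_point hh.convex_strict_epigraph hA
    (fun hxA : (x, h x) ∈ A => lt_irrefl _ hxA.2)
  set ψ := φ.comp (ContinuousLinearMap.inl ℝ E ℝ)
  set β := φ (0, 1)
  have hφ_apply (y : E) (r : ℝ) : φ (y, r) = ψ y + r * β := by
    rw [show ((y, r) : E × ℝ) = (y, 0) + r • ((0 : E), (1 : ℝ)) by simp, map_add, map_smul,
      smul_eq_mul, mul_comm]
    rfl
  have hβ : β < 0 := by
    have := hφ (x, h x + 1) ⟨hx, lt_add_one _⟩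
    rw [hφ_apply, hφ_apply] at this
    linarith
  have hβ0 : β ≠ 0 := hβ.ne
  -- Let `ε → 0` over the points `(y, h y + ε)` of the strict epigraph.
  have hkey (y : E) (hy : y ∈ s) : ψ (y - x) ≤ β * (h x - h y) := by
    refine le_of_forall_pos_lt_add fun ε hε => ?_
    have := hφ (y, h y + ε / -β) ⟨hy, lt_add_of_pos_right _ (div_pos hε (neg_pos.2 hβ))⟩
    rw [hφ_apply, hφ_apply, add_mul, show ε / -β * β = -ε by field_simp] at this
    rw [map_sub]
    linarith
  refine ⟨(-β⁻¹) • ψ, fun y hy => ?_⟩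
  have := mul_le_mul_of_nonneg_left (hkey y hy) (neg_nonneg.2 (inv_nonpos.2 hβ.le))
  rw [show -β⁻¹ * (β * (h x - h y)) = h y - h x by field_simp; ring] at this
  change h x + -β⁻¹ * ψ (y - x) ≤ h y
  linarith

theorem LinearMap.apply_eq_dotProduct {ι : Type*} [Fintype ι] [DecidableEq ι]
    (ℓ : (ι → ℝ) →ₗ[ℝ] ℝ) (v : ι → ℝ) : ℓ v = (fun i => ℓ (Pi.single i 1)) ⬝ᵥ v := by
  conv_lhs => rw [← Finset.univ_sum_single v]
  simp only [map_sum, dotProduct]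
  refine Finset.sum_congr rfl fun i _ => ?_
  rw [mul_comm, ← smul_eq_mul, ← map_smul, ← Pi.single_smul, smul_eq_mul, mul_one]

theorem ConvexOn.exists_nonneg_subgradient {ι : Type*} [Fintype ι] {s : Set (ι → ℝ)}
    {h : (ι → ℝ) → ℝ} (hs : IsOpen s) (hs_lower : IsLowerSet s) (hh : ConvexOn ℝ s h)
    (hmono : MonotoneOn h s) {x : ι → ℝ} (hx : x ∈ s) :
    ∃ p : ι → ℝ, 0 ≤ p ∧ ∀ y ∈ s, h x + p ⬝ᵥ (y - x) ≤ h y := by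
  classical
  obtain ⟨ℓ, hℓ⟩ := hh.exists_subgradient hs hx
  have hℓp := LinearMap.apply_eq_dotProduct ℓ.toLinearMap
  refine ⟨_, fun i => ?_, fun y hy => (hℓp _).symm ▸ hℓ y hy⟩
  have hxi : x - Pi.single i 1 ≤ x := sub_le_self _ (Pi.single_nonneg.2 zero_le_one)
  have := (hℓ _ (hs_lower hxi hx)).trans (hmono (hs_lower hxi hx) hx hxi)
  simpa using this

theorem ConvexOn.fun_sum {E ι : Type*} [AddCommGroup E] [Module ℝ E] {s : Set E}
    {t : Finset ι} {f : ι → E → ℝ} (hs : Convex ℝ s) (hf : ∀ i ∈ t, ConvexOn ℝ s (f i)) :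
    ConvexOn ℝ s (fun x => ∑ i ∈ t, f i x) := by
  classical
  induction t using Finset.induction_on with
  | empty => simpa using convexOn_const 0 hs
  | insert i t hi ih =>
    simp_rw [Finset.sum_insert hi]
    exact (hf i (Finset.mem_insert_self i t)).add
      (ih fun j hj => hf j (Finset.mem_insert_of_mem hj))

theorem convexOn_dotProduct_add_const {ι : Type*} [Fintype ι] {s : Set (ι → ℝ)}
    (hs : Convex ℝ s) (v : ι → ℝ) (c : ℝ) : ConvexOn ℝ s (fun y => v ⬝ᵥ y + c) :=
  ((dotProductBilin ℝ ℝ v).convexOn hs).add (convexOn_const c hs)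

section C0

variable {n : ℕ}

theorem isOpen_C0 : IsOpen (C0 n) :=
  isOpen_lt (continuous_finsetSum _ fun i _ => by fun_prop) continuous_const

theorem convex_C0 : Convex ℝ (C0 n) := by
  have hconv : ConvexOn ℝ univ (fun x : Fin n → ℝ => ∑ i, Real.exp (2 * x i)) :=
    ConvexOn.fun_sum convex_univ fun i _ =>
      convexOn_exp.comp_linearMap ((2 : ℝ) • LinearMap.proj (R := ℝ) (φ := fun _ => ℝ) i)
  simpa [C0] using hconv.convex_lt 1

theorem isLowerSet_C0 : IsLowerSet (C0 n) := fun _ _ hxy hy =>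
  (Finset.sum_le_sum fun i _ => Real.exp_le_exp.2 (by linarith [hxy i])).trans_lt hy

theorem C0_subset_nonpos : C0 n ⊆ Iic 0 := by
  intro x hx i
  have : Real.exp (2 * x i) < 1 :=
    (Finset.single_le_sum (fun j _ => (Real.exp_pos (2 * x j)).le) (Finset.mem_univ i)).trans_lt hx
  simp only [Pi.zero_apply]
  linarith [Real.exp_lt_one_iff.1 this]

end C0

section raySlope

variable {n : ℕ} {h : (Fin n → ℝ) → ℝ} {a b : Fin n → ℝ} {m : ℝ}

theorem raySlope_le_of_forall_le (hm : ∀ t < 0, h a + t * m ≤ h (a + t • b)) :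
    raySlope n h a b ≤ m := by
  have hlim : Tendsto (fun t : ℝ => ((h a / t + m : ℝ) : EReal)) atBot (𝓝 (m : EReal)) := by
    rw [EReal.tendsto_coe]
    simpa using (tendsto_const_nhds.div_atBot tendsto_id).add_const m
  refine (limsup_le_limsup ?_).trans_eq hlim.limsup_eq
  filter_upwards [eventually_lt_atBot 0] with t ht
  rw [EReal.coe_le_coe_iff, div_add' _ _ _ ht.ne, mul_comm]
  exact div_le_div_of_nonpos_of_le ht.le (hm t ht)

theorem exists_lt_sub_of_raySlope_lt (hm : raySlope n h a b < m) :
    ∃ t < 0, t * m < h (a + t • b) - h a := by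
  obtain ⟨m', hm', hm'm⟩ := EReal.lt_iff_exists_real_btwn.1 hm
  have hm'm : m' < m := EReal.coe_lt_coe_iff.1 hm'm
  have hquot : ∀ᶠ t in atBot, h (a + t • b) / t < m' := by
    simpa using eventually_lt_of_limsup_lt hm'
  have hconst : ∀ᶠ t : ℝ in atBot, m' - m < h a / t :=
    (tendsto_const_nhds.div_atBot tendsto_id).eventually (lt_mem_nhds (sub_neg.2 hm'm))
  obtain ⟨t, ht, hquot, hconst⟩ := (eventually_lt_atBot 0 |>.and (hquot.and hconst)).exists
  refine ⟨t, ht, ?_⟩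
  rw [mul_comm, ← div_lt_iff_of_neg ht, sub_div]
  linarith

end raySlope

section affineMinorantSlopes

variable {ι : Type*} [Fintype ι]

def affineMinorantSlopes (s : Set (ι → ℝ)) (g : (ι → ℝ) → ℝ) : Set (ι → ℝ) :=
  {q | ∃ c : ℝ, ∀ y ∈ s, q ⬝ᵥ y - c ≤ g y}

variable {s : Set (ι → ℝ)} {g : (ι → ℝ) → ℝ}

theorem convex_affineMinorantSlopes : Convex ℝ (affineMinorantSlopes s g) := by
  rintro q ⟨c, hc⟩ q' ⟨c', hc'⟩ a b ha hb hab
  refine ⟨a * c + b * c', fun y hy => ?_⟩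
  have := add_le_add (mul_le_mul_of_nonneg_left (hc y hy) ha)
    (mul_le_mul_of_nonneg_left (hc' y hy) hb)
  rw [← add_mul, hab, one_mul] at this
  simp only [add_dotProduct, smul_dotProduct, smul_eq_mul]
  linarith

theorem isUpperSet_affineMinorantSlopes (hs : s ⊆ Iic 0) :
    IsUpperSet (affineMinorantSlopes s g) := by
  rintro q q' hqq' ⟨c, hc⟩
  refine ⟨c, fun y hy => ?_⟩
  have := dotProduct_le_dotProduct_of_nonneg_right hqq' (neg_nonneg.2 (hs hy))
  rw [dotProduct_neg, dotProduct_neg] at this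
  linarith [hc y hy]

theorem mem_affineMinorantSlopes_of_subgradient {q z : ι → ℝ}
    (hq : ∀ y ∈ s, g z + q ⬝ᵥ (y - z) ≤ g y) : q ∈ affineMinorantSlopes s g :=
  ⟨q ⬝ᵥ z - g z, fun y hy => by linarith [hq y hy, dotProduct_sub q y z]⟩

end affineMinorantSlopes

theorem IsLowerSet.add_smul_mem {ι : Type*} {s : Set (ι → ℝ)} (hs : IsLowerSet s)
    {x b : ι → ℝ} (hx : x ∈ s) (hb : 0 ≤ b) {t : ℝ} (ht : t ≤ 0) : x + t • b ∈ s :=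
  hs (add_le_of_nonpos_right (smul_nonpos_of_nonpos_of_nonneg ht hb)) hx

section raySlopeSubgradient

variable {n : ℕ} {s : Set (Fin n → ℝ)} {h : (Fin n → ℝ) → ℝ} {x b : Fin n → ℝ}

theorem raySlope_le_dotProduct_of_subgradient (hs : IsLowerSet s) (hx : x ∈ s) (hb : 0 ≤ b)
    {p : Fin n → ℝ} (hp : ∀ y ∈ s, h x + p ⬝ᵥ (y - x) ≤ h y) : raySlope n h x b ≤ p ⬝ᵥ b :=
  raySlope_le_of_forall_le fun t ht => by
    simpa [dotProduct_smul] using hp _ (hs.add_smul_mem hx hb ht.le)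

theorem exists_mem_affineMinorantSlopes_dotProduct_lt (hs : IsOpen s) (hs_lower : IsLowerSet s)
    (hh : ConvexOn ℝ s h) (hmono : MonotoneOn h s) (hx : x ∈ s) (hb : 0 ≤ b) {m : ℝ}
    (hm : raySlope n h x b < m) : ∃ q ∈ affineMinorantSlopes s h, 0 ≤ q ∧ q ⬝ᵥ b < m := by
  obtain ⟨t, ht, htm⟩ := exists_lt_sub_of_raySlope_lt hm
  have hz := hs_lower.add_smul_mem hx hb ht.le
  obtain ⟨q, hq0, hq⟩ := hh.exists_nonneg_subgradient hs hs_lower hmono hz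
  refine ⟨q, mem_affineMinorantSlopes_of_subgradient hq, hq0, ?_⟩
  have := hq x hx
  rw [show x - (x + t • b) = (-t) • b by module, dotProduct_smul, smul_eq_mul] at this
  nlinarith

end raySlopeSubgradient

theorem IsUpperSet.nonneg_of_forall_lt_dotProduct {ι : Type*} [Fintype ι] [DecidableEq ι]
    {S : Set (ι → ℝ)} (hS : IsUpperSet S) (hne : S.Nonempty) {β : ι → ℝ} {u : ℝ}
    (h : ∀ q ∈ S, u < β ⬝ᵥ q) : 0 ≤ β := by
  obtain ⟨q₀, hq₀⟩ := hne
  intro i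
  by_contra! hβi
  change β i < 0 at hβi
  have hT : 0 ≤ (β ⬝ᵥ q₀ - u) / -β i :=
    div_nonneg (sub_nonneg.2 (h q₀ hq₀).le) (by linarith)
  have hle : q₀ ≤ q₀ + ((β ⬝ᵥ q₀ - u) / -β i) • Pi.single i 1 :=
    le_add_of_nonneg_right (smul_nonneg hT (Pi.single_nonneg.2 zero_le_one))
  have := h _ (hS hle hq₀)
  rw [dotProduct_add, dotProduct_smul, dotProduct_single, mul_one, smul_eq_mul, div_neg, neg_mul,
    div_mul_cancel₀ _ hβi.ne] at this
  linarith

-- Otherwise `β ⬝ᵥ ·` separates `p` from `S` with a gap `u - β ⬝ᵥ p`; `β ≥ 0` as `S` is an upper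
-- set, and the hypothesis for `b = ⌊N • β⌋₊ + 1` bounds `N` times the gap by `∑ i, p i + 1`.
theorem mem_closure_of_forall_nat_dotProduct_le {ι : Type*} [Fintype ι] {S : Set (ι → ℝ)}
    (hS : Convex ℝ S) (hS_upper : IsUpperSet S) {p : ι → ℝ} (hp : 0 ≤ p)
    (h : ∀ b : ι → ℕ, (∀ i, 0 < b i) →
      ∃ q ∈ S, 0 ≤ q ∧ q ⬝ᵥ (fun i => (b i : ℝ)) ≤ p ⬝ᵥ (fun i => (b i : ℝ)) + 1) :
    p ∈ closure S := by
  classical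
  by_contra hpS
  obtain ⟨φ, u, hφp, hφS⟩ := geometric_hahn_banach_point_closed hS.closure isClosed_closure hpS
  set β : ι → ℝ := fun i => φ (Pi.single i 1)
  have hφ : ∀ v, φ v = β ⬝ᵥ v := LinearMap.apply_eq_dotProduct φ.toLinearMap
  have hβS : ∀ q ∈ S, u < β ⬝ᵥ q := fun q hq => hφ q ▸ hφS q (subset_closure hq)
  obtain ⟨q₀, hq₀, -⟩ := h 1 fun _ => one_pos
  have hβ := hS_upper.nonneg_of_forall_lt_dotProduct ⟨q₀, hq₀⟩ hβS
  rw [hφ] at hφp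
  obtain ⟨N, hN⟩ := exists_nat_gt ((∑ i, p i + 1) / (u - β ⬝ᵥ p))
  have hN0 : (0 : ℝ) < N := lt_of_le_of_lt (div_nonneg
    (add_nonneg (Finset.sum_nonneg fun i _ => hp i) zero_le_one) (sub_pos.2 hφp).le) hN
  set b : ι → ℕ := fun i => ⌊N * β i⌋₊ + 1
  have hb_lower : (N : ℝ) • β ≤ fun i => (b i : ℝ) := fun i => by
    simpa [b] using (Nat.lt_floor_add_one ((N : ℝ) * β i)).le
  have hb_upper : (fun i => (b i : ℝ)) ≤ (N : ℝ) • β + 1 := fun i => by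
    simpa [b] using Nat.floor_le (mul_nonneg hN0.le (hβ i))
  obtain ⟨q, hqS, hq0, hqb⟩ := h b fun _ => Nat.succ_pos _
  have hβq := hβS q hqS
  have : (N : ℝ) * (u - β ⬝ᵥ p) < ∑ i, p i + 1 := by
    have h1 := dotProduct_le_dotProduct_of_nonneg_left hb_lower hq0
    have h2 := dotProduct_le_dotProduct_of_nonneg_left hb_upper hp
    rw [dotProduct_smul, smul_eq_mul, dotProduct_comm q β] at h1
    rw [dotProduct_add, dotProduct_smul, smul_eq_mul, dotProduct_one, dotProduct_comm p β] at h2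
    nlinarith
  rw [div_lt_iff₀ (sub_pos.2 hφp)] at hN
  linarith

theorem EReal.tendsto_coe_of_eventually_le_of_forall_sub_le {α : Type*} {l : Filter α}
    {F : α → EReal} {a : ℝ} (hle : ∀ᶠ c in l, F c ≤ a)
    (hge : ∀ δ > (0 : ℝ), ∀ᶠ c in l, ((a - δ : ℝ) : EReal) ≤ F c) :
    Tendsto F l (𝓝 (a : EReal)) := by
  refine tendsto_order.2 ⟨fun b hb => ?_, fun b hb => hle.mono fun c hc => hc.trans_lt hb⟩
  obtain ⟨r, hbr, hra⟩ := EReal.lt_iff_exists_real_btwn.1 hb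
  have hra : r < a := EReal.coe_lt_coe_iff.1 hra
  filter_upwards [hge (a - r) (by linarith)] with c hc
  exact hbr.trans_le (by simpa using hc)

section convEnv

variable {n : ℕ} {f g : (Fin n → ℝ) → ℝ} {x : Fin n → ℝ}

theorem le_convEnv {c : ℝ} {u : (Fin n → ℝ) → ℝ} (hu : ConvexOn ℝ (C0 n) u)
    (huf : ∀ y ∈ C0 n, u y ≤ f y) (hug : ∀ y ∈ C0 n, u y ≤ g y + c) :
    ((u x : ℝ) : EReal) ≤ convEnv n f g c x :=
  le_iSup₂_of_le (f := fun (u : (Fin n → ℝ) → ℝ) (_ : ConvexOn ℝ (C0 n) u ∧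
      ∀ y ∈ C0 n, u y ≤ min (f y) (g y + c)) => ((u x : ℝ) : EReal))
    u ⟨hu, fun y hy => le_min (huf y hy) (hug y hy)⟩ le_rfl

theorem convEnv_le (hx : x ∈ C0 n) (c : ℝ) : convEnv n f g c x ≤ f x :=
  iSup₂_le fun _ hu => EReal.coe_le_coe_iff.2 ((hu.2 x hx).trans (min_le_left _ _))

theorem tendsto_convEnv_of_forall_add_smul_one_mem (hx : x ∈ C0 n) {p : Fin n → ℝ}
    (hp : ∀ y ∈ C0 n, f x + p ⬝ᵥ (y - x) ≤ f y)
    (hpg : ∀ ε > (0 : ℝ), p + ε • 1 ∈ affineMinorantSlopes (C0 n) g) :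
    Tendsto (fun c => convEnv n f g c x) atTop (𝓝 (f x : EReal)) := by
  refine EReal.tendsto_coe_of_eventually_le_of_forall_sub_le
    (Eventually.of_forall (convEnv_le hx)) fun δ hδ => ?_
  obtain ⟨ε, hε, hεx⟩ := exists_pos_mul_lt hδ (-∑ i, x i)
  obtain ⟨C, hC⟩ := hpg ε hε
  filter_upwards [eventually_ge_atTop (C + f x - p ⬝ᵥ x)] with c hc
  have hu := convexOn_dotProduct_add_const convex_C0 (p + ε • 1) (f x - p ⬝ᵥ x)
  refine le_trans ?_ (le_convEnv hu (fun y hy => ?_) fun y hy => by linarith [hC y hy])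
  · rw [EReal.coe_le_coe_iff, add_dotProduct, smul_dotProduct, one_dotProduct, smul_eq_mul]
    linarith
  · have hy0 : ∑ i, y i ≤ 0 := Finset.sum_nonpos fun i _ => C0_subset_nonpos hy i
    have := hp y hy
    rw [add_dotProduct, smul_dotProduct, one_dotProduct, smul_eq_mul]
    rw [dotProduct_sub] at this
    nlinarith

end convEnv

theorem convEnv_tendsto_of_raySlope_general (n : ℕ) (f g : (Fin n → ℝ) → ℝ)
    (hfconv : ConvexOn ℝ (C0 n) f) (hgconv : ConvexOn ℝ (C0 n) g)
    (hfmono : ∀ x ∈ C0 n, ∀ y ∈ C0 n, (∀ i, x i ≤ y i) → f x ≤ f y)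
    (hgmono : ∀ x ∈ C0 n, ∀ y ∈ C0 n, (∀ i, x i ≤ y i) → g x ≤ g y)
    (hslope : ∀ a ∈ C0 n, ∀ b : Fin n → ℕ, (∀ i, 0 < b i) →
      raySlope n g a (fun i => (b i : ℝ)) ≤ raySlope n f a (fun i => (b i : ℝ))) :
    ∀ᵐ x ∂(volume.restrict (C0 n)),
      Tendsto (fun c : ℝ => convEnv n f g c x) atTop (𝓝 ((f x : ℝ) : EReal)) := by
  filter_upwards [ae_restrict_mem isOpen_C0.measurableSet] with x hx
  obtain ⟨p, hp0, hp⟩ := hfconv.exists_nonneg_subgradient isOpen_C0 isLowerSet_C0 hfmono hx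
  have hS_upper := isUpperSet_affineMinorantSlopes (g := g) C0_subset_nonpos
  have hpS : p ∈ closure (affineMinorantSlopes (C0 n) g) := by
    refine mem_closure_of_forall_nat_dotProduct_le convex_affineMinorantSlopes hS_upper hp0
      fun b hb => ?_
    have hb0 : (0 : Fin n → ℝ) ≤ fun i => (b i : ℝ) := fun i => Nat.cast_nonneg _
    have hlt : raySlope n g x _ < ((p ⬝ᵥ fun i => (b i : ℝ)) + 1 : ℝ) :=
      (hslope x hx b hb).trans_lt <|
        (raySlope_le_dotProduct_of_subgradient isLowerSet_C0 hx hb0 hp).trans_lt <|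
          EReal.coe_lt_coe_iff.2 (lt_add_one _)
    obtain ⟨q, hqS, hq0, hqb⟩ :=
      exists_mem_affineMinorantSlopes_dotProduct_lt isOpen_C0 isLowerSet_C0 hgconv hgmono hx hb0 hlt
    exact ⟨q, hqS, hq0, hqb.le⟩
  refine tendsto_convEnv_of_forall_add_smul_one_mem hx hp fun ε hε => interior_subset <|
    hS_upper.mem_interior_of_forall_lt hpS fun i => ?_
  simpa using hε

/-- Let `f, g` be convex functions on `C₀` increasing in each variable with
boundary values `0`.  If `lim_{t→-∞} f(a+tb)/t ≥ lim_{t→-∞} g(a+tb)/t` for all `a ∈ C₀` and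
all `b ∈ ℕⁿ` with positive entries, then `lim_{c→∞} P_{C₀}(f,g+c) = f` a.e. on `C₀`. -/
theorem convEnv_tendsto_of_raySlope (n : ℕ) (f g : (Fin n → ℝ) → ℝ)
    (hfconv : ConvexOn ℝ (C0 n) f) (hgconv : ConvexOn ℝ (C0 n) g)
    (hfmono : ∀ x ∈ C0 n, ∀ y ∈ C0 n, (∀ i, x i ≤ y i) → f x ≤ f y)
    (hgmono : ∀ x ∈ C0 n, ∀ y ∈ C0 n, (∀ i, x i ≤ y i) → g x ≤ g y)
    (hfbd : ∀ x ∈ frontier (C0 n), Tendsto f (𝓝[C0 n] x) (𝓝 (0 : ℝ)))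
    (hgbd : ∀ x ∈ frontier (C0 n), Tendsto g (𝓝[C0 n] x) (𝓝 (0 : ℝ)))
    (hslope : ∀ a ∈ C0 n, ∀ b : Fin n → ℕ, (∀ i, 0 < b i) →
      raySlope n g a (fun i => (b i : ℝ)) ≤ raySlope n f a (fun i => (b i : ℝ))) :
    ∀ᵐ x ∂(volume.restrict (C0 n)),
      Tendsto (fun c : ℝ => convEnv n f g c x) atTop (𝓝 ((f x : ℝ) : EReal)) :=
  convEnv_tendsto_of_raySlope_general n f g hfconv hgconv hfmono hgmono hslope

end
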